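/- Let X and X̂ be ℝ^d-valued random variables with bounded densities p_X, p_X̂ with respect to Lebesgue measure. Then for every essentially bounded function f of bounded variation on ℝ^d, every p ∈ (0,∞) and q ∈ [1,∞), E[|f(X) − f(X̂)|^q] ≤ (2‖f‖_∞)^{q−1}(2^{p+1}K₀^p ‖f‖_∞ + A₁(‖p_X‖_∞ + ‖p_X̂‖_∞)|Df|(ℝ^d)) · (E[|X − X̂|^p])^{1/(p+1)}. -/

import Mathlib

/-!
By the layer-cake formula, `|f(X) - f(X̂)| = ∫ |1{f(X) > t} - 1{f(X̂) > t}| dt`. Fix a level `t` and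
a scale `ε`. The pointwise maximal estimate forces `1{f > t}` to take the same value at any two
points closer than `ε` outside the super-level set `S_t = {M(|D1{f>t}|) > 1/(2K₀ε)}` (first for
almost every pair, then for all pairs off a null set). So `X` and `X̂` lie on different sides of
`t` only if one of them falls into `S_t` or `|X - X̂| ≥ ε`. The weak (1,1) inequality gives
`|S_t| ≤ 2K₀ε A₁ |D1{f>t}|(ℝ^d)`, the bounded densities turn this into a probability, the coarea
formula sums over `t`, and only `t ∈ [-‖f‖∞, ‖f‖∞]` contributes the Markov term
`P(|X - X̂| ≥ ε) ≤ E|X - X̂|^p / ε^p`. Taking `ε = (E|X - X̂|^p)^(1/(p+1)) / (2K₀)` balances the two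
terms, and `|f(X) - f(X̂)|^q ≤ (2‖f‖∞)^(q-1) |f(X) - f(X̂)|` reduces `q` to `1`.
-/

open MeasureTheory Metric Filter Set
open scoped ENNReal Topology

noncomputable section

abbrev Euc (d : ℕ) := EuclideanSpace ℝ (Fin d)

/-- Hardy--Littlewood maximal function of a measure. -/
def maximal {d : ℕ} (ν : Measure (Euc d)) (x : Euc d) : ℝ≥0∞ :=
  ⨆ (s : ℝ) (_ : 0 < s), ν (closedBall x s) / volume (closedBall x s)

/-- Restricted Hardy--Littlewood maximal function of a measure. -/
def maximalR {d : ℕ} (R : ℝ) (ν : Measure (Euc d)) (x : Euc d) : ℝ≥0∞ :=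
  ⨆ (s : ℝ) (_ : s ∈ Set.Ioc 0 R), ν (closedBall x s) / volume (closedBall x s)

/- The pointwise maximal estimate for the BV function `1_A`, with `ν` standing for `|D1_A|`. -/
def IndicatorMaximalBound {d : ℕ} (K₀ : ℝ) (ν : Measure (Euc d)) (A : Set (Euc d)) : Prop :=
  ∀ᵐ x ∂(volume : Measure (Euc d)), ∀ᵐ y ∂(volume : Measure (Euc d)),
    ENNReal.ofReal |A.indicator (fun _ => (1 : ℝ)) x - A.indicator (fun _ => (1 : ℝ)) y|
      ≤ ENNReal.ofReal (K₀ * dist x y)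
        * (maximalR (2 * dist x y) ν x + maximalR (2 * dist x y) ν y)

def MaximalWeakTypeOneOne (d : ℕ) (A₁ : ℝ) : Prop :=
  ∀ ν : Measure (Euc d), IsFiniteMeasure ν → ∀ lam : ℝ≥0∞, lam ≠ 0 →
    volume {x : Euc d | lam < maximal ν x} ≤ ENNReal.ofReal A₁ * ν univ / lam

lemma IndicatorMaximalBound.congr_ae {d : ℕ} {K₀ : ℝ} {ν : Measure (Euc d)} {A B : Set (Euc d)}
    (h : IndicatorMaximalBound K₀ ν A) (hAB : A =ᵐ[volume] B) : IndicatorMaximalBound K₀ ν B := by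
  have hind := indicator_ae_eq_of_ae_eq_set (f := fun _ => (1 : ℝ)) hAB
  filter_upwards [h, hind] with x hx hxAB
  filter_upwards [hx, hind] with y hxy hyAB
  rwa [← hxAB, ← hyAB]

lemma maximalR_le_maximal {d : ℕ} (R : ℝ) (ν : Measure (Euc d)) (x : Euc d) :
    maximalR R ν x ≤ maximal ν x :=
  iSup₂_le fun s hs =>
    le_iSup₂ (f := fun s (_ : 0 < s) => ν (closedBall x s) / volume (closedBall x s)) s hs.1

/- Two good points `x, y` are linked through a common good `z ∈ T` near `x`, which exists because
`x` lies in the support of `μ.restrict T`. -/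
lemma exists_measure_zero_forall_of_ae_ae {α β : Type*} [PseudoMetricSpace α]
    [MeasurableSpace α] [OpensMeasurableSpace α] [HereditarilyLindelofSpace α]
    {μ : Measure α} {T : Set α} {g : α → β} {e : ℝ}
    (h : ∀ᵐ x ∂μ, ∀ᵐ y ∂μ, x ∈ T → y ∈ T → dist x y < e → g x = g y) :
    ∃ N, μ N = 0 ∧ ∀ x ∉ N, ∀ y ∉ N, x ∈ T → y ∈ T → dist x y < e → g x = g y := by
  refine ⟨{x | ∀ᵐ y ∂μ, x ∈ T → y ∈ T → dist x y < e → g x = g y}ᶜ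
    ∪ (μ.restrict T).supportᶜ ∩ T, measure_union_null h ?_, ?_⟩
  · exact nonpos_iff_eq_zero.1
      ((Measure.le_restrict_apply _ _).trans_eq Measure.measure_compl_support)
  intro x hx y hy hxT hyT hxy
  simp only [mem_union, mem_compl_iff, mem_inter_iff, mem_ofPred_eq, not_or, not_and',
    not_not] at hx hy
  have hball : μ (ball x (e - dist x y) ∩ T) ≠ 0 := by
    rw [← Measure.restrict_apply measurableSet_ball]
    exact ((Measure.mem_support_iff_forall x).1 (hx.2 hxT) _
      (ball_mem_nhds x (by linarith))).ne'
  obtain ⟨z, ⟨hzx, hzT⟩, hxz, hyz⟩ :=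
    Measure.exists_mem_of_measure_ne_zero_of_ae hball (ae_restrict_of_ae (hx.1.and hy.1))
  rw [mem_ball] at hzx
  have hdxz : dist x z < e := by rw [dist_comm]; linarith [dist_nonneg (x := x) (y := y)]
  have hdyz : dist y z < e := by linarith [dist_triangle y x z, dist_comm x y, dist_comm x z]
  exact (hxz hxT hzT hdxz).trans (hyz hyT hzT hdyz).symm

/- Where both maximal functions are at most `1 / (2 K₀ e)`, the pointwise estimate bounds the
jump of the indicator across a gap shorter than `e` by `dist x y / e < 1`, so there is none. -/
lemma mem_iff_mem_of_maximal_le {d : ℕ} {ν : Measure (Euc d)} {A : Set (Euc d)} {K₀ e R : ℝ}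
    (hK₀ : 0 < K₀) (he : 0 < e) {x y : Euc d}
    (hest : ENNReal.ofReal |A.indicator (fun _ => (1 : ℝ)) x - A.indicator (fun _ => (1 : ℝ)) y|
      ≤ ENNReal.ofReal (K₀ * dist x y) * (maximalR R ν x + maximalR R ν y))
    (hx : maximal ν x ≤ ENNReal.ofReal (1 / (2 * K₀ * e)))
    (hy : maximal ν y ≤ ENNReal.ofReal (1 / (2 * K₀ * e))) (hxy : dist x y < e) :
    x ∈ A ↔ y ∈ A := by
  by_contra hne
  have hjump : |A.indicator (fun _ => (1 : ℝ)) x - A.indicator (fun _ => (1 : ℝ)) y| = 1 := by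
    by_cases hxA : x ∈ A <;> by_cases hyA : y ∈ A <;> simp_all
  have hle : (1 : ℝ≥0∞) ≤ ENNReal.ofReal (dist x y / e) := calc
    1 = ENNReal.ofReal |A.indicator (fun _ => (1 : ℝ)) x - A.indicator (fun _ => (1 : ℝ)) y| := by
      rw [hjump, ENNReal.ofReal_one]
    _ ≤ ENNReal.ofReal (K₀ * dist x y) * (maximalR R ν x + maximalR R ν y) := hest
    _ ≤ ENNReal.ofReal (K₀ * dist x y)
        * (ENNReal.ofReal (1 / (2 * K₀ * e)) + ENNReal.ofReal (1 / (2 * K₀ * e))) := by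
      gcongr
      exacts [(maximalR_le_maximal R ν x).trans hx, (maximalR_le_maximal R ν y).trans hy]
    _ = ENNReal.ofReal (dist x y / e) := by
      rw [← ENNReal.ofReal_add (by positivity) (by positivity),
        ← ENNReal.ofReal_mul (by positivity)]
      congr 1
      field_simp
      ring
  rw [ENNReal.one_le_ofReal, one_le_div he] at hle
  linarith

lemma quasiMeasurePreserving_of_map_eq_withDensity {Ω α : Type*} [MeasurableSpace Ω]
    [MeasurableSpace α] {P : Measure Ω} {μ : Measure α} {Y : Ω → α} {ρ : α → ℝ≥0∞}
    (hY : Measurable Y) (hd : P.map Y = μ.withDensity ρ) : Measure.QuasiMeasurePreserving Y P μ :=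
  ⟨hY, hd ▸ withDensity_absolutelyContinuous μ ρ⟩

lemma measure_preimage_le_essSup_mul {Ω α : Type*} [MeasurableSpace Ω] [MeasurableSpace α]
    {P : Measure Ω} {μ : Measure α} {Y : Ω → α} {ρ : α → ℝ≥0∞}
    (hY : Measurable Y) (hd : P.map Y = μ.withDensity ρ) {S : Set α} (hS : MeasurableSet S) :
    P (Y ⁻¹' S) ≤ essSup ρ μ * μ S := by
  rw [← Measure.map_apply hY hS, hd, withDensity_apply _ hS, ← setLIntegral_const]
  exact lintegral_mono_ae (ae_restrict_of_ae ae_le_essSup)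

lemma measure_le_dist_le_lintegral_div {Ω E : Type*} [MeasurableSpace Ω] [PseudoMetricSpace E]
    {P : Measure Ω} {X Y : Ω → E} (hm : AEMeasurable (fun ω => edist (X ω) (Y ω)) P)
    {e p : ℝ} (he : 0 < e) (hp : 0 < p) :
    P {ω | e ≤ dist (X ω) (Y ω)}
      ≤ (∫⁻ ω, edist (X ω) (Y ω) ^ p ∂P) / ENNReal.ofReal (e ^ p) := by
  refine le_trans (measure_mono fun ω hω => ?_)
    (meas_ge_le_lintegral_div (hm.pow_const p) (by positivity) ENNReal.ofReal_ne_top)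
  rw [mem_ofPred_eq, ← ENNReal.ofReal_rpow_of_pos he, edist_dist]
  exact ENNReal.rpow_le_rpow (ENNReal.ofReal_le_ofReal hω) hp.le

lemma volume_setOf_not_lt_iff_lt (a b : ℝ) :
    volume {t : ℝ | ¬(t < a ↔ t < b)} = ENNReal.ofReal |a - b| := by
  have hIco : {t : ℝ | ¬(t < a ↔ t < b)} = Ico (min a b) (max a b) := by
    ext t
    simp only [mem_ofPred_eq, mem_Ico, min_le_iff, lt_max_iff]
    grind
  rw [hIco, Real.volume_Ico, max_sub_min_eq_abs, abs_sub_comm]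

lemma lintegral_ofReal_abs_sub_eq {Ω : Type*} [MeasurableSpace Ω] {P : Measure Ω} [SFinite P]
    {U V : Ω → ℝ} (hU : Measurable U) (hV : Measurable V) :
    ∫⁻ ω, ENNReal.ofReal |U ω - V ω| ∂P = ∫⁻ t, P {ω | ¬(t < U ω ↔ t < V ω)} := by
  have hs : MeasurableSet {z : Ω × ℝ | ¬(z.2 < U z.1 ↔ z.2 < V z.1)} :=
    measurableSet_setOfPred.2 <|
      ((measurableSet_lt measurable_snd (hU.comp measurable_fst)).mem.iff
        (measurableSet_lt measurable_snd (hV.comp measurable_fst)).mem).not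
  simp_rw [← volume_setOf_not_lt_iff_lt]
  exact (Measure.prod_apply hs).symm.trans (Measure.prod_apply_symm hs)

lemma two_mul_mul_rpow_div_rpow {s K M p : ℝ} (hs : 0 < s) (hK : 0 < K) :
    2 * M * (s ^ (p + 1) / (s / (2 * K)) ^ p) = 2 ^ (p + 1) * K ^ p * M * s := by
  rw [Real.div_rpow hs.le (by positivity), Real.rpow_add hs, Real.rpow_one,
    Real.mul_rpow zero_le_two hK.le, Real.rpow_add two_pos, Real.rpow_one]
  have : 0 < s ^ p := Real.rpow_pos_of_pos hs p
  field_simp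

lemma rpow_le_rpow_sub_one_mul {a b q : ℝ} (ha : 0 ≤ a) (hab : a ≤ b) (hq : 1 ≤ q) :
    a ^ q ≤ b ^ (q - 1) * a := by
  rcases ha.eq_or_lt with rfl | ha
  · rw [Real.zero_rpow (by linarith), mul_zero]
  · calc a ^ q = a ^ (q - 1) * a := by rw [← Real.rpow_add_one ha.ne', sub_add_cancel]
      _ ≤ b ^ (q - 1) * a := by gcongr

lemma ae_abs_le_toReal_eLpNorm_top {α : Type*} [MeasurableSpace α] {μ : Measure α} {f : α → ℝ}
    (hf : eLpNorm f ⊤ μ ≠ ∞) : ∀ᵐ x ∂μ, |f x| ≤ (eLpNorm f ⊤ μ).toReal := by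
  filter_upwards [enorm_ae_le_eLpNormEssSup f μ] with x hx
  rwa [← ENNReal.ofReal_le_iff_le_toReal hf, ← Real.enorm_eq_ofReal_abs, eLpNorm_exponent_top]

lemma lintegral_ofReal_abs_sub_rpow_le {Ω : Type*} [MeasurableSpace Ω] {P : Measure Ω}
    {U V : Ω → ℝ} {M q : ℝ} (hU : ∀ᵐ ω ∂P, |U ω| ≤ M) (hV : ∀ᵐ ω ∂P, |V ω| ≤ M) (hq : 1 ≤ q) :
    ∫⁻ ω, ENNReal.ofReal |U ω - V ω| ^ q ∂P
      ≤ ENNReal.ofReal ((2 * M) ^ (q - 1)) * ∫⁻ ω, ENNReal.ofReal |U ω - V ω| ∂P := by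
  rw [← lintegral_const_mul' _ _ ENNReal.ofReal_ne_top]
  refine lintegral_mono_ae ?_
  filter_upwards [hU, hV] with ω hUω hVω
  rw [ENNReal.ofReal_rpow_of_nonneg (abs_nonneg _) (by linarith),
    ← ENNReal.ofReal_mul' (abs_nonneg _)]
  exact ENNReal.ofReal_le_ofReal (rpow_le_rpow_sub_one_mul (abs_nonneg _)
    (by linarith [abs_sub (U ω) (V ω)]) hq)

section RandomVectors

variable {d : ℕ} {Ω : Type*} [MeasurableSpace Ω] {P : Measure Ω} {X Xh : Ω → Euc d}
  {pX pXh : Euc d → ℝ≥0∞}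

/- `X` and `Xh` can be separated by `A` only if one of them falls into the super-level set
`S = {maximal ν > 1 / (2 K₀ e)}`, or `dist X Xh ≥ e`; the weak (1,1) inequality bounds
`volume S` by `2 K₀ e A₁ ν(univ)`. -/
lemma measure_not_mem_iff_mem_le (hX : Measurable X) (hXh : Measurable Xh)
    (hdX : P.map X = volume.withDensity pX) (hdXh : P.map Xh = volume.withDensity pXh)
    {ν : Measure (Euc d)} {A : Set (Euc d)} {K₀ A₁ e : ℝ} (hK₀ : 0 < K₀) (he : 0 < e)
    (hweak : MaximalWeakTypeOneOne d A₁) [IsFiniteMeasure ν]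
    (hest : IndicatorMaximalBound K₀ ν A) :
    P {ω | ¬(X ω ∈ A ↔ Xh ω ∈ A)}
      ≤ ENNReal.ofReal A₁ * (essSup pX volume + essSup pXh volume)
          * ENNReal.ofReal (2 * K₀ * e) * ν univ + P {ω | e ≤ dist (X ω) (Xh ω)} := by
  set lam := ENNReal.ofReal (1 / (2 * K₀ * e))
  set S := toMeasurable volume {z | lam < maximal ν z}
  have hS : MeasurableSet S := measurableSet_toMeasurable _ _
  have hmax : ∀ z ∉ S, maximal ν z ≤ lam := fun z hz =>
    not_lt.1 fun h => hz (subset_toMeasurable _ _ h)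
  have hlocal : ∀ᵐ x ∂(volume : Measure (Euc d)), ∀ᵐ y ∂(volume : Measure (Euc d)),
      x ∈ Sᶜ → y ∈ Sᶜ → dist x y < e → (x ∈ A) = (y ∈ A) := by
    filter_upwards [hest] with x hx
    filter_upwards [hx] with y hxy hxS hyS hd
    exact propext (mem_iff_mem_of_maximal_le hK₀ he hxy (hmax x hxS) (hmax y hyS) hd)
  obtain ⟨N, hN, hNA⟩ := exists_measure_zero_forall_of_ae_ae hlocal
  have hNc : ∀ᵐ z ∂(volume : Measure (Euc d)), z ∉ N := measure_eq_zero_iff_ae_notMem.1 hN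
  have hsub : {ω | ¬(X ω ∈ A ↔ Xh ω ∈ A)}
      ≤ᵐ[P] (X ⁻¹' S ∪ Xh ⁻¹' S ∪ {ω | e ≤ dist (X ω) (Xh ω)} : Set Ω) := by
    filter_upwards [(quasiMeasurePreserving_of_map_eq_withDensity hX hdX).ae hNc,
      (quasiMeasurePreserving_of_map_eq_withDensity hXh hdXh).ae hNc]
      with ω hXN hXhN hsep
    by_contra hout
    replace hout : ω ∉ X ⁻¹' S ∪ Xh ⁻¹' S ∪ {ω | e ≤ dist (X ω) (Xh ω)} := hout
    simp only [mem_union, mem_preimage, mem_ofPred_eq, not_or, not_le] at hout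
    exact hsep (eq_iff_iff.1 (hNA _ hXN _ hXhN hout.1.1 hout.1.2 hout.2))
  have hvol : volume S ≤ ENNReal.ofReal A₁ * ν univ * ENNReal.ofReal (2 * K₀ * e) := by
    rw [measure_toMeasurable]
    refine (hweak ν inferInstance lam (ENNReal.ofReal_pos.2 (by positivity)).ne').trans_eq ?_
    rw [div_eq_mul_inv, ← ENNReal.ofReal_inv_of_pos (by positivity), one_div, inv_inv]
  calc P {ω | ¬(X ω ∈ A ↔ Xh ω ∈ A)}
      ≤ P (X ⁻¹' S) + P (Xh ⁻¹' S) + P {ω | e ≤ dist (X ω) (Xh ω)} :=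
        (measure_mono_ae hsub).trans
          ((measure_union_le _ _).trans (add_le_add_left (measure_union_le _ _) _))
    _ ≤ essSup pX volume * volume S + essSup pXh volume * volume S
          + P {ω | e ≤ dist (X ω) (Xh ω)} := by
        gcongr
        exacts [measure_preimage_le_essSup_mul hX hdX hS,
          measure_preimage_le_essSup_mul hXh hdXh hS]
    _ ≤ _ := by
        rw [← add_mul]
        grw [hvol]
        exact le_of_eq (by ring)

lemma lintegral_ofReal_abs_sub_le_add_measure_le_dist (hX : Measurable X) (hXh : Measurable Xh)
    (hdX : P.map X = volume.withDensity pX) (hdXh : P.map Xh = volume.withDensity pXh)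
    (hbX : essSup pX volume ≠ ∞) (hbXh : essSup pXh volume ≠ ∞) [SFinite P]
    {f : Euc d → ℝ} (hf : Measurable f) {M : ℝ} (hM : ∀ᵐ x ∂(volume : Measure (Euc d)), |f x| ≤ M)
    {Df : Measure (Euc d)} {DI : ℝ → Measure (Euc d)}
    (hcoarea : ∫⁻ t, DI t univ ∂(volume : Measure ℝ) = Df univ)
    {K₀ A₁ e : ℝ} (hK₀ : 0 < K₀) (he : 0 < e)
    (hpt : ∀ᵐ t ∂(volume : Measure ℝ),
      IsFiniteMeasure (DI t) ∧ IndicatorMaximalBound K₀ (DI t) {z | t < f z})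
    (hweak : MaximalWeakTypeOneOne d A₁) :
    ∫⁻ ω, ENNReal.ofReal |f (X ω) - f (Xh ω)| ∂P
      ≤ ENNReal.ofReal A₁ * (essSup pX volume + essSup pXh volume)
          * ENNReal.ofReal (2 * K₀ * e) * Df univ
        + ENNReal.ofReal (2 * M) * P {ω | e ≤ dist (X ω) (Xh ω)} := by
  set c := ENNReal.ofReal A₁ * (essSup pX volume + essSup pXh volume)
    * ENNReal.ofReal (2 * K₀ * e)
  have hc : c ≠ ∞ := by finiteness
  set Pe := P {ω | e ≤ dist (X ω) (Xh ω)}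
  have hlevel : ∀ᵐ t ∂(volume : Measure ℝ), P {ω | ¬(t < f (X ω) ↔ t < f (Xh ω))}
      ≤ c * DI t univ + (Icc (-M) M).indicator (fun _ => Pe) t := by
    filter_upwards [hpt] with t ⟨hfin, hest⟩
    by_cases ht : t ∈ Icc (-M) M
    · rw [indicator_of_mem ht]
      exact measure_not_mem_iff_mem_le hX hXh hdX hdXh hK₀ he hweak hest
    · rw [indicator_of_notMem ht, add_zero]
      refine (measure_eq_zero_iff_ae_notMem.2 ?_).trans_le zero_le
      filter_upwards [(quasiMeasurePreserving_of_map_eq_withDensity hX hdX).ae hM,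
        (quasiMeasurePreserving_of_map_eq_withDensity hXh hdXh).ae hM] with ω h1 h2
      rw [mem_Icc, not_and_or, not_le, not_le] at ht
      rw [abs_le] at h1 h2
      simp only [not_not]
      rcases ht with ht | ht
      · exact iff_of_true (by linarith) (by linarith)
      · exact iff_of_false (by linarith) (by linarith)
  calc ∫⁻ ω, ENNReal.ofReal |f (X ω) - f (Xh ω)| ∂P
      = ∫⁻ t, P {ω | ¬(t < f (X ω) ↔ t < f (Xh ω))} :=
        lintegral_ofReal_abs_sub_eq (hf.comp hX) (hf.comp hXh)
    _ ≤ ∫⁻ t, (c * DI t univ + (Icc (-M) M).indicator (fun _ => Pe) t) :=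
        lintegral_mono_ae hlevel
    _ = c * Df univ + ENNReal.ofReal (2 * M) * Pe := by
        rw [lintegral_add_right' _ (measurable_const.indicator measurableSet_Icc).aemeasurable,
          lintegral_const_mul' _ _ hc, hcoarea, lintegral_indicator_const measurableSet_Icc,
          Real.volume_Icc, sub_neg_eq_add, ← two_mul, mul_comm Pe]

lemma lintegral_ofReal_abs_sub_le_of_ne_zero_of_ne_top (hX : Measurable X) (hXh : Measurable Xh)
    (hdX : P.map X = volume.withDensity pX) (hdXh : P.map Xh = volume.withDensity pXh)
    (hbX : essSup pX volume ≠ ∞) (hbXh : essSup pXh volume ≠ ∞) [SFinite P]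
    {f : Euc d → ℝ} (hf : Measurable f) {M : ℝ} (hM : ∀ᵐ x ∂(volume : Measure (Euc d)), |f x| ≤ M)
    {Df : Measure (Euc d)} {DI : ℝ → Measure (Euc d)}
    (hcoarea : ∫⁻ t, DI t univ ∂(volume : Measure ℝ) = Df univ)
    {K₀ A₁ : ℝ} (hK₀ : 0 < K₀)
    (hpt : ∀ᵐ t ∂(volume : Measure ℝ),
      IsFiniteMeasure (DI t) ∧ IndicatorMaximalBound K₀ (DI t) {z | t < f z})
    (hweak : MaximalWeakTypeOneOne d A₁)
    {p : ℝ} (hp : 0 < p) (hE0 : ∫⁻ ω, edist (X ω) (Xh ω) ^ p ∂P ≠ 0)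
    (hEtop : ∫⁻ ω, edist (X ω) (Xh ω) ^ p ∂P ≠ ∞) :
    ∫⁻ ω, ENNReal.ofReal |f (X ω) - f (Xh ω)| ∂P
      ≤ (ENNReal.ofReal (2 ^ (p + 1) * K₀ ^ p * M)
          + ENNReal.ofReal A₁ * (essSup pX volume + essSup pXh volume) * Df univ)
        * (∫⁻ ω, edist (X ω) (Xh ω) ^ p ∂P) ^ (1 / (p + 1)) := by
  set Ep := ∫⁻ ω, edist (X ω) (Xh ω) ^ p ∂P
  have hp1 : p + 1 ≠ 0 := by linarith
  have hEp_ne_top : Ep ^ (1 / (p + 1)) ≠ ∞ := ENNReal.rpow_ne_top_of_nonneg (by positivity) hEtop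
  set s := (Ep ^ (1 / (p + 1))).toReal
  have hs : 0 < s :=
    ENNReal.toReal_pos (ENNReal.rpow_pos (pos_iff_ne_zero.2 hE0) hEtop).ne' hEp_ne_top
  have hsE : Ep ^ (1 / (p + 1)) = ENNReal.ofReal s := (ENNReal.ofReal_toReal hEp_ne_top).symm
  have hEs : Ep = ENNReal.ofReal (s ^ (p + 1)) := by
    rw [← ENNReal.ofReal_rpow_of_pos hs, ← hsE, one_div, ENNReal.rpow_inv_rpow hp1]
  -- the choice of `e` balancing the two terms
  set e := s / (2 * K₀)
  have he : 0 < e := by positivity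
  have h2K₀e : 2 * K₀ * e = s := by simp only [e]; field_simp
  calc ∫⁻ ω, ENNReal.ofReal |f (X ω) - f (Xh ω)| ∂P
      ≤ ENNReal.ofReal A₁ * (essSup pX volume + essSup pXh volume)
          * ENNReal.ofReal (2 * K₀ * e) * Df univ
        + ENNReal.ofReal (2 * M) * P {ω | e ≤ dist (X ω) (Xh ω)} :=
        lintegral_ofReal_abs_sub_le_add_measure_le_dist hX hXh hdX hdXh hbX hbXh hf hM hcoarea
          hK₀ he hpt hweak
    _ ≤ ENNReal.ofReal A₁ * (essSup pX volume + essSup pXh volume)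
          * ENNReal.ofReal (2 * K₀ * e) * Df univ
        + ENNReal.ofReal (2 * M) * (Ep / ENNReal.ofReal (e ^ p)) := by
        gcongr
        exact measure_le_dist_le_lintegral_div (hX.edist hXh).aemeasurable he hp
    _ = _ := by
        rw [hEs, ← ENNReal.ofReal_div_of_pos (by positivity), ← ENNReal.ofReal_mul' (by positivity),
          two_mul_mul_rpow_div_rpow hs hK₀, ← hEs, hsE, h2K₀e,
          ENNReal.ofReal_mul' hs.le]
        ring

lemma lintegral_ofReal_abs_sub_le (hX : Measurable X) (hXh : Measurable Xh)
    (hdX : P.map X = volume.withDensity pX) (hdXh : P.map Xh = volume.withDensity pXh)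
    (hbX : essSup pX volume ≠ ∞) (hbXh : essSup pXh volume ≠ ∞) [SFinite P]
    {f : Euc d → ℝ} (hf : Measurable f) {M : ℝ} (hM : ∀ᵐ x ∂(volume : Measure (Euc d)), |f x| ≤ M)
    {Df : Measure (Euc d)} {DI : ℝ → Measure (Euc d)}
    (hcoarea : ∫⁻ t, DI t univ ∂(volume : Measure ℝ) = Df univ)
    {K₀ A₁ : ℝ} (hK₀ : 0 < K₀)
    (hpt : ∀ᵐ t ∂(volume : Measure ℝ),
      IsFiniteMeasure (DI t) ∧ IndicatorMaximalBound K₀ (DI t) {z | t < f z})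
    (hweak : MaximalWeakTypeOneOne d A₁)
    {p : ℝ} (hp : 0 < p) :
    ∫⁻ ω, ENNReal.ofReal |f (X ω) - f (Xh ω)| ∂P
      ≤ (ENNReal.ofReal (2 ^ (p + 1) * K₀ ^ p * M)
          + ENNReal.ofReal A₁ * (essSup pX volume + essSup pXh volume) * Df univ)
        * (∫⁻ ω, edist (X ω) (Xh ω) ^ p ∂P) ^ (1 / (p + 1)) := by
  have hzero (h : ∀ᵐ ω ∂P, f (X ω) = f (Xh ω)) :
      ∫⁻ ω, ENNReal.ofReal |f (X ω) - f (Xh ω)| ∂P = 0 :=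
    (lintegral_congr_ae (g := 0) (h.mono fun ω hω => by simp [hω])).trans lintegral_zero
  by_cases hM0 : M ≤ 0
  · refine (hzero ?_).trans_le zero_le
    filter_upwards [(quasiMeasurePreserving_of_map_eq_withDensity hX hdX).ae hM,
      (quasiMeasurePreserving_of_map_eq_withDensity hXh hdXh).ae hM] with ω h1 h2
    rw [abs_nonpos_iff.1 (h1.trans hM0), abs_nonpos_iff.1 (h2.trans hM0)]
  by_cases hE0 : ∫⁻ ω, edist (X ω) (Xh ω) ^ p ∂P = 0
  · refine (hzero ?_).trans_le zero_le
    filter_upwards [(lintegral_eq_zero_iff' ((hX.edist hXh).pow_const p).aemeasurable).1 hE0]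
      with ω hω
    rw [Pi.zero_apply, ENNReal.rpow_eq_zero_iff_of_pos hp, edist_eq_zero] at hω
    rw [hω]
  by_cases hEtop : ∫⁻ ω, edist (X ω) (Xh ω) ^ p ∂P = ∞
  · rw [hEtop, ENNReal.top_rpow_of_pos (by positivity), ENNReal.mul_top]
    · exact le_top
    · exact (add_pos_of_pos_of_nonneg
        (ENNReal.ofReal_pos.2 (mul_pos (by positivity) (not_le.1 hM0))) zero_le).ne'
  exact lintegral_ofReal_abs_sub_le_of_ne_zero_of_ne_top hX hXh hdX hdXh hbX hbXh hf hM hcoarea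
    hK₀ hpt hweak hp hE0 hEtop

end RandomVectors

/-- `Df` is the total variation measure `|Df|` of `f`,
`DI t` the total variation measure `|D 1_{{f > t}}|` of the super-level sets
(linked to `Df` by the coarea formula), `K₀` the constant of the pointwise
maximal-function estimate for BV functions and `A₁` the constant of the
Hardy–Littlewood weak (1,1) maximal inequality. -/
theorem stmt_1_general {d : ℕ} {Ω : Type*} [MeasurableSpace Ω] (P : Measure Ω) [IsProbabilityMeasure P]
    (X Xh : Ω → Euc d) (hX : Measurable X) (hXh : Measurable Xh)
    (pX pXh : Euc d → ℝ≥0∞)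
    (hdX : P.map X = volume.withDensity pX)
    (hdXh : P.map Xh = volume.withDensity pXh)
    (hbX : essSup pX volume ≠ ∞) (hbXh : essSup pXh volume ≠ ∞)
    (f : Euc d → ℝ) (hf1 : Integrable f volume) (hfb : eLpNorm f ⊤ volume ≠ ∞)
    (Df : Measure (Euc d))
    (DI : ℝ → Measure (Euc d))
    (hcoarea : ∫⁻ t, DI t Set.univ ∂(volume : Measure ℝ) = Df Set.univ)
    (K₀ A₁ : ℝ) (hK₀ : 0 < K₀)
    (hpt : ∀ᵐ t ∂(volume : Measure ℝ), IsFiniteMeasure (DI t) ∧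
      ∀ᵐ x ∂(volume : Measure (Euc d)), ∀ᵐ y ∂(volume : Measure (Euc d)),
        ENNReal.ofReal |({z | t < f z}).indicator (fun _ => (1:ℝ)) x
            - ({z | t < f z}).indicator (fun _ => (1:ℝ)) y|
          ≤ ENNReal.ofReal (K₀ * dist x y)
            * (maximalR (2 * dist x y) (DI t) x + maximalR (2 * dist x y) (DI t) y))
    (hweak : ∀ ν : Measure (Euc d), IsFiniteMeasure ν → ∀ lam : ℝ≥0∞, lam ≠ 0 →
      volume {x : Euc d | lam < maximal ν x} ≤ ENNReal.ofReal A₁ * ν Set.univ / lam)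
    (p q : ℝ) (hp : 0 < p) (hq : 1 ≤ q) :
    ∫⁻ ω, ENNReal.ofReal |f (X ω) - f (Xh ω)| ^ q ∂P
      ≤ ENNReal.ofReal ((2 * (eLpNorm f ⊤ volume).toReal) ^ (q - 1))
        * (ENNReal.ofReal (2 ^ (p + 1) * K₀ ^ p * (eLpNorm f ⊤ volume).toReal)
            + ENNReal.ofReal A₁ * (essSup pX volume + essSup pXh volume) * Df Set.univ)
        * (∫⁻ ω, edist (X ω) (Xh ω) ^ p ∂P) ^ (1 / (p + 1)) := by
  obtain ⟨f', hf', hff'⟩ : ∃ f', Measurable f' ∧ f =ᵐ[volume] f' :=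
    ⟨_, hf1.aemeasurable.measurable_mk, hf1.aemeasurable.ae_eq_mk⟩
  have hM : ∀ᵐ x ∂(volume : Measure (Euc d)), |f' x| ≤ (eLpNorm f ⊤ volume).toReal := by
    filter_upwards [ae_abs_le_toReal_eLpNorm_top hfb, hff'] with x hx hfx
    rwa [← hfx]
  have hpt' : ∀ᵐ t ∂(volume : Measure ℝ),
      IsFiniteMeasure (DI t) ∧ IndicatorMaximalBound K₀ (DI t) {z | t < f' z} := by
    filter_upwards [hpt] with t ⟨hfin, hest⟩
    exact ⟨hfin, IndicatorMaximalBound.congr_ae hest (hff'.mono fun x hx => by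
      change (t < f x) = (t < f' x); rw [hx])⟩
  have hqX := quasiMeasurePreserving_of_map_eq_withDensity hX hdX
  have hqXh := quasiMeasurePreserving_of_map_eq_withDensity hXh hdXh
  calc ∫⁻ ω, ENNReal.ofReal |f (X ω) - f (Xh ω)| ^ q ∂P
      = ∫⁻ ω, ENNReal.ofReal |f' (X ω) - f' (Xh ω)| ^ q ∂P := by
        refine lintegral_congr_ae ?_
        filter_upwards [hqX.ae hff', hqXh.ae hff'] with ω h1 h2
        rw [h1, h2]
    _ ≤ ENNReal.ofReal ((2 * (eLpNorm f ⊤ volume).toReal) ^ (q - 1))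
          * ∫⁻ ω, ENNReal.ofReal |f' (X ω) - f' (Xh ω)| ∂P :=
        lintegral_ofReal_abs_sub_rpow_le (hqX.ae hM) (hqXh.ae hM) hq
    _ ≤ _ := by
        rw [mul_assoc]
        gcongr
        exact lintegral_ofReal_abs_sub_le hX hXh hdX hdXh hbX hbXh hf' hM hcoarea hK₀ hpt'
          hweak hp

/-- Multi-dimensional Avikainen estimate for essentially bounded BV functions
(Theorem 2.11 with `r = ∞`). `Df` is the total variation measure `|Df|` of `f`,
`DI t` the total variation measure `|D 1_{{f > t}}|` of the super-level sets
(linked to `Df` by the coarea formula), `K₀` the constant of the pointwise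
maximal-function estimate for BV functions and `A₁` the constant of the
Hardy–Littlewood weak (1,1) maximal inequality. -/
theorem stmt_1 {d : ℕ} {Ω : Type*} [MeasurableSpace Ω] (P : Measure Ω) [IsProbabilityMeasure P]
    (X Xh : Ω → Euc d) (hX : Measurable X) (hXh : Measurable Xh)
    (pX pXh : Euc d → ℝ≥0∞)
    (hdX : P.map X = volume.withDensity pX)
    (hdXh : P.map Xh = volume.withDensity pXh)
    (hbX : essSup pX volume ≠ ∞) (hbXh : essSup pXh volume ≠ ∞)
    (f : Euc d → ℝ) (hf1 : Integrable f volume) (hfb : eLpNorm f ⊤ volume ≠ ∞)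
    (Df : Measure (Euc d)) [IsFiniteMeasure Df]
    (DI : ℝ → Measure (Euc d))
    (hcoarea : ∫⁻ t, DI t Set.univ ∂(volume : Measure ℝ) = Df Set.univ)
    (K₀ A₁ : ℝ) (hK₀ : 0 < K₀) (hA₁ : 0 < A₁)
    (hpt : ∀ᵐ t ∂(volume : Measure ℝ), IsFiniteMeasure (DI t) ∧
      ∀ᵐ x ∂(volume : Measure (Euc d)), ∀ᵐ y ∂(volume : Measure (Euc d)),
        ENNReal.ofReal |({z | t < f z}).indicator (fun _ => (1:ℝ)) x
            - ({z | t < f z}).indicator (fun _ => (1:ℝ)) y|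
          ≤ ENNReal.ofReal (K₀ * dist x y)
            * (maximalR (2 * dist x y) (DI t) x + maximalR (2 * dist x y) (DI t) y))
    (hweak : ∀ ν : Measure (Euc d), IsFiniteMeasure ν → ∀ lam : ℝ≥0∞, lam ≠ 0 →
      volume {x : Euc d | lam < maximal ν x} ≤ ENNReal.ofReal A₁ * ν Set.univ / lam)
    (p q : ℝ) (hp : 0 < p) (hq : 1 ≤ q) :
    ∫⁻ ω, ENNReal.ofReal |f (X ω) - f (Xh ω)| ^ q ∂P
      ≤ ENNReal.ofReal ((2 * (eLpNorm f ⊤ volume).toReal) ^ (q - 1))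
        * (ENNReal.ofReal (2 ^ (p + 1) * K₀ ^ p * (eLpNorm f ⊤ volume).toReal)
            + ENNReal.ofReal A₁ * (essSup pX volume + essSup pXh volume) * Df Set.univ)
        * (∫⁻ ω, edist (X ω) (Xh ω) ^ p ∂P) ^ (1 / (p + 1)) :=
  stmt_1_general P X Xh hX hXh pX pXh hdX hdXh hbX hbXh f hf1 hfb Df DI hcoarea K₀ A₁ hK₀ hpt hweak
    p q hp hq
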